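/- If a real-valued $2\pi$-periodic trigonometric polynomial $y$ solves the Babenko equation $\hat S y = 0$ (with real constants $c, g_0$), then its derivative lies in the kernel of the linearized Babenko operator: $\hat S_1(y)\,(\partial_u y) = 0$. (This is the zero eigenvalue of $\hat S_1$ associated with translational invariance of Stokes waves.) -/

import Mathlib

open MeasureTheory
open scoped Real

/-- A trigonometric polynomial `u ↦ ∑ₖ aₖ e^{iku}`, represented by its finitely supported
Fourier coefficients; multiplication of coefficients is convolution, which corresponds to
pointwise multiplication of the associated functions. -/
abbrev TrigPoly : Type := AddMonoidAlgebra ℂ ℤ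

/-- Evaluation of a trigonometric polynomial: `teval c u = ∑ k, c k * exp (i k u)`. -/
noncomputable def teval (c : TrigPoly) (u : ℝ) : ℂ :=
  Finsupp.sum c.coeff fun k a => a * Complex.exp (Complex.I * (k : ℂ) * (u : ℂ))

/-- The Fourier multiplier operator with symbol `m`. -/
noncomputable def mulOp (m : ℤ → ℂ) (c : TrigPoly) : TrigPoly :=
  Finsupp.sum c.coeff fun k a => AddMonoidAlgebra.single k (m k * a)

/-- The circular Hilbert transform `Ĥ e^{iku} = i sign(k) e^{iku}` (with `sign 0 = 0`). -/
noncomputable def Hop : TrigPoly → TrigPoly := mulOp fun k => Complex.I * (Int.sign k : ℂ)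

/-- The operator `k̂ e^{iku} = |k| e^{iku}`. -/
noncomputable def Kop : TrigPoly → TrigPoly := mulOp fun k => ((|k| : ℤ) : ℂ)

/-- Differentiation `∂ᵤ e^{iku} = i k e^{iku}`. -/
noncomputable def Dop : TrigPoly → TrigPoly := mulOp fun k => Complex.I * (k : ℂ)

/-- A trigonometric polynomial is real-valued. -/
def RealValued (c : TrigPoly) : Prop := ∀ u : ℝ, (teval c u).im = 0
/-- The Babenko operator `Ŝ y = c²k̂y - g₀[ xᵤ y - Ĥ(y yᵤ) ]` with `xᵤ = 1 + k̂y`,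
`yᵤ = ∂ᵤ y`. -/
noncomputable def Sop (c g0 : ℝ) (y : TrigPoly) : TrigPoly :=
  (c ^ 2 : ℂ) • Kop y - (g0 : ℂ) • ((1 + Kop y) * y - Hop (y * Dop y))

/-- The linearized Babenko operator
`Ŝ₁(y) f = (c²k̂ - g₀)f - g₀[ y (k̂f) + f (k̂y) + k̂(yf) ]`. -/
noncomputable def S1op (c g0 : ℝ) (y f : TrigPoly) : TrigPoly :=
  (c ^ 2 : ℂ) • Kop f - (g0 : ℂ) • f
    - (g0 : ℂ) • (y * Kop f + f * Kop y + Kop (y * f))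

/-! `Ŝ` commutes with translations `u ↦ u + s` and `Ŝ₁(y)` is its linearization at `y`, so
differentiating `Ŝ(y(· + s)) = 0` in `s` gives `Ŝ₁(y) yᵤ = 0`. Algebraically: `∂ᵤ` is a
derivation of the convolution algebra of coefficients that commutes with every Fourier
multiplier, and `∂ᵤ Ĥ = -k̂`; these give `Ŝ₁(y)(∂ᵤ y) = ∂ᵤ(Ŝ y)`, which vanishes because
`Ŝ y` is identically zero. -/

open AddMonoidAlgebra

section FourierMultiplier

variable (m n : ℤ → ℂ)

lemma mulOp_coeff (c : TrigPoly) (j : ℤ) : (mulOp m c).coeff j = m j * c.coeff j := by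
  classical
  rw [mulOp, coeff_finsuppSum, Finsupp.sum_apply]
  simp only [coeff_single, Finsupp.single_apply]
  rw [Finsupp.sum_ite_eq' c.coeff j (fun k a => m k * a)]
  split_ifs with h
  · rfl
  · rw [Finsupp.notMem_support_iff.mp h, mul_zero]

lemma mulOp_single (k : ℤ) (a : ℂ) : mulOp m (single k a) = single k (m k * a) := by
  rw [mulOp, coeff_single, Finsupp.sum_single_index (by rw [mul_zero, single_zero])]

lemma mulOp_zero : mulOp m 0 = 0 := by
  ext j; simp [mulOp_coeff]

lemma mulOp_add (a b : TrigPoly) : mulOp m (a + b) = mulOp m a + mulOp m b := by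
  ext j; simp only [mulOp_coeff, coeff_add, Finsupp.add_apply]; ring

lemma mulOp_sub (a b : TrigPoly) : mulOp m (a - b) = mulOp m a - mulOp m b := by
  ext j; simp only [mulOp_coeff, coeff_sub, Finsupp.sub_apply]; ring

lemma mulOp_smul (r : ℂ) (a : TrigPoly) : mulOp m (r • a) = r • mulOp m a := by
  ext j; simp only [mulOp_coeff, coeff_smul_apply, smul_eq_mul]; ring

lemma mulOp_mulOp (a : TrigPoly) : mulOp m (mulOp n a) = mulOp (m * n) a := by
  ext j; simp only [mulOp_coeff, Pi.mul_apply]; ring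

lemma mulOp_comm (a : TrigPoly) : mulOp m (mulOp n a) = mulOp n (mulOp m a) := by
  rw [mulOp_mulOp, mulOp_mulOp, mul_comm]

end FourierMultiplier

lemma Dop_one : Dop (1 : TrigPoly) = 0 := by
  rw [Dop, one_def, mulOp_single, Int.cast_zero, mul_zero, zero_mul, single_zero]

lemma Dop_Hop (a : TrigPoly) : Dop (Hop a) = -Kop a := by
  have symbol (k : ℤ) : Complex.I * k * (Complex.I * Int.sign k) = -((|k| : ℤ) : ℂ) := by
    have hk : (k : ℂ) * Int.sign k = ((|k| : ℤ) : ℂ) := by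
      rw [Int.abs_eq_natAbs, ← Int.mul_sign_self]; push_cast; rfl
    linear_combination (k : ℂ) * Int.sign k * Complex.I_mul_I - hk
  ext j
  simp only [Dop, Hop, Kop, mulOp_mulOp, mulOp_coeff, Pi.mul_apply, coeff_neg, Finsupp.neg_apply,
    symbol, neg_mul]

lemma Dop_Kop (a : TrigPoly) : Dop (Kop a) = Kop (Dop a) := mulOp_comm _ _ a

lemma Dop_mul (a b : TrigPoly) : Dop (a * b) = Dop a * b + a * Dop b := by
  induction a using induction_linear with
  | zero => simp only [zero_mul, Dop, mulOp_zero, add_zero]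
  | add x y hx hy => simp only [add_mul, Dop, mulOp_add] at hx hy ⊢; rw [hx, hy]; ring
  | single k v =>
    induction b using induction_linear with
    | zero => simp only [mul_zero, Dop, mulOp_zero, add_zero]
    | add x y hx hy => simp only [mul_add, Dop, mulOp_add] at hx hy ⊢; rw [hx, hy]; ring
    | single l w =>
      simp only [Dop, mulOp_single, single_mul_single, ← single_add]
      congr 1
      push_cast
      ring

lemma S1op_Dop_self (c g0 : ℝ) (y : TrigPoly) : S1op c g0 y (Dop y) = Dop (Sop c g0 y) := by
  have Dop_sub (a b : TrigPoly) : Dop (a - b) = Dop a - Dop b := mulOp_sub _ a b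
  have Dop_smul (r : ℂ) (a : TrigPoly) : Dop (r • a) = r • Dop a := mulOp_smul _ r a
  have Dop_add (a b : TrigPoly) : Dop (a + b) = Dop a + Dop b := mulOp_add _ a b
  rw [Sop, S1op, Dop_sub, Dop_smul, Dop_smul, Dop_sub, Dop_mul, Dop_add, Dop_one, Dop_Hop,
    Dop_Kop, sub_sub, ← smul_add]
  congr 2
  ring

lemma teval_zero (u : ℝ) : teval 0 u = 0 := by simp [teval]

lemma teval_add (a b : TrigPoly) (u : ℝ) : teval (a + b) u = teval a u + teval b u := by
  unfold teval
  rw [coeff_add]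
  apply Finsupp.sum_add_index' <;> intros <;> simp [add_mul]

lemma teval_single (k : ℤ) (a : ℂ) (u : ℝ) :
    teval (single k a) u = a * Complex.exp (Complex.I * k * u) := by
  rw [teval, coeff_single, Finsupp.sum_single_index (zero_mul _)]

lemma hasDerivAt_teval (z : TrigPoly) (u : ℝ) :
    HasDerivAt (teval z) (teval (Dop z) u) u := by
  induction z using induction_linear with
  | zero =>
    rw [Dop, mulOp_zero, teval_zero, show teval 0 = fun _ => 0 from funext teval_zero]
    exact hasDerivAt_const u 0
  | add x y hx hy =>
    rw [Dop, mulOp_add, teval_add, show teval (x + y) = fun v => teval x v + teval y v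
      from funext (teval_add x y)]
    exact hx.add hy
  | single k v =>
    have hexp : HasDerivAt (fun w : ℂ => Complex.exp (Complex.I * k * w))
        (Complex.exp (Complex.I * k * u) * (Complex.I * k)) u := by
      simpa using ((hasDerivAt_id (u : ℂ)).const_mul (Complex.I * k)).cexp
    rw [Dop, mulOp_single, teval_single]
    simpa only [funext (teval_single k v)] using
      (hexp.comp_ofReal.const_mul v).congr_deriv (by ring)

theorem deriv_mem_kernel_of_Babenko_general (c g0 : ℝ) (y : TrigPoly)
    (hS : ∀ u : ℝ, teval (Sop c g0 y) u = 0) :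
    ∀ u : ℝ, teval (S1op c g0 y (Dop y)) u = 0 := by
  intro u
  rw [S1op_Dop_self]
  have hderiv := hasDerivAt_teval (Sop c g0 y) u
  rw [show teval (Sop c g0 y) = fun _ => 0 from funext hS] at hderiv
  exact hderiv.unique (hasDerivAt_const u 0)

/-- If a real-valued 2π-periodic trigonometric polynomial y solves the Babenko equation
`Ŝ y = 0`, then its derivative lies in the kernel of the linearized Babenko operator:
`Ŝ₁(y)(∂ᵤ y) = 0` (the zero eigenvalue associated with translational invariance). -/
theorem deriv_mem_kernel_of_Babenko (c g0 : ℝ) (y : TrigPoly) (hy : RealValued y)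
    (hS : ∀ u : ℝ, teval (Sop c g0 y) u = 0) :
    ∀ u : ℝ, teval (S1op c g0 y (Dop y)) u = 0 :=
  deriv_mem_kernel_of_Babenko_general c g0 y hS
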